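/- Under the timing model of the value dissemination phase with Consistent Broadcast: if honest nodes are initialized by global time 0, each local computation step set takes at most t_comp (with the c-ready step taking at most n·t_comp for n received messages), clock drift is bounded by Δ, and message delivery between honest nodes takes at most δ, then every honest node obtains the private values of all honest nodes by local-clock time (n+2)·t_comp + 7Δ + 3δ. -/
import Mathlib


/-- Value dissemination with Consistent Broadcast: every honest
node obtains the private values of all honest nodes by local-clock time
`(n+2)·t_comp + 7Δ + 3δ`, composing the per-step bounds of the three message
rounds (c-send, c-ready, c-final). -/
theorem cb_value_dissemination_bound
    (Node : Type) (Honest : Node → Prop)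
    (n tcomp Δ δ : ℕ)
    (lInit : Node → ℕ) (gCSend : Node → ℕ)
    (gCSendRecv lCSendRecv : Node → Node → ℕ)
    (gCReadySend gCReadyRecv : Node → Node → ℕ)
    (gCFinalSend : Node → ℕ)
    (gCFinalRecv lCFinalRecv : Node → Node → ℕ)
    -- initialization completes by global time 0, hence local time ≤ Δ
    (hInit : ∀ i, Honest i → lInit i ≤ Δ)
    -- at most t_comp local computation before multicasting c-send, plus drift Δ
    (hCSend : ∀ i, Honest i → gCSend i ≤ lInit i + tcomp + Δ)
    -- c-send delivered within δ
    (hCSendRecv : ∀ i j, Honest i → Honest j →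
      gCSendRecv i j ≤ gCSend i + δ)
    -- drift Δ to the recipient's local clock
    (hCSendLocal : ∀ i j, Honest i → Honest j →
      lCSendRecv i j ≤ gCSendRecv i j + Δ)
    -- at most n·t_comp local computation for the n received c-send messages
    -- before unicasting the signed c-ready, plus drift Δ back to global time
    (hCReadySend : ∀ i j, Honest i → Honest j →
      gCReadySend i j ≤ lCSendRecv i j + n * tcomp + Δ)
    -- c-ready delivered within δ
    (hCReadyRecv : ∀ i j, Honest i → Honest j →
      gCReadyRecv i j ≤ gCReadySend i j + δ)
    -- at most t_comp further local computation (drift Δ each way) before the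
    -- source multicasts its c-final message with the certificate
    (hCFinalSend : ∀ i, Honest i →
      (∀ j, Honest j → gCFinalSend i ≤ gCReadyRecv i j + tcomp + 2 * Δ))
    -- c-final delivered within δ
    (hCFinalRecv : ∀ i j, Honest i → Honest j →
      gCFinalRecv i j ≤ gCFinalSend i + δ)
    -- drift Δ to the recipient's local clock
    (hCFinalLocal : ∀ i j, Honest i → Honest j →
      lCFinalRecv i j ≤ gCFinalRecv i j + Δ) :
    ∀ i j, Honest i → Honest j →
      lCFinalRecv i j ≤ (n + 2) * tcomp + 7 * Δ + 3 * δ := by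
  intro i j hi hj
  have h1 := hInit i hi
  have h2 := hCSend i hi
  have h3 := hCSendRecv i j hi hj
  have h4 := hCSendLocal i j hi hj
  have h5 := hCReadySend i j hi hj
  have h6 := hCReadyRecv i j hi hj
  have h7 := hCFinalSend i hi j hj
  have h8 := hCFinalRecv i j hi hj
  have h9 := hCFinalLocal i j hi hj
  have : (n + 2) * tcomp = n * tcomp + 2 * tcomp := by ring
  omega
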